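/- arXiv:2303.14248 — 7 statements merged into one kernel-verified Lean document; each statement's English description precedes it below -/
import Mathlib

section
/- Let a₁, a₂, a₃ be positive real numbers with a₁a₂ < a₃. Then the cubic polynomial z³ + a₁z² + a₂z + a₃ has a complex root with strictly positive real part. -/
/-- Routh–Hurwitz criterion (instability half) for cubic polynomials:
if `a₁ a₂ a₃ > 0` and `a₁ * a₂ < a₃`, the cubic `z³ + a₁ z² + a₂ z + a₃`
has a complex root with strictly positive real part. -/
theorem routh_hurwitz_cubic_unstable (a₁ a₂ a₃ : ℝ)
    (h₁ : 0 < a₁) (h₂ : 0 < a₂) (h₃ : 0 < a₃) (h : a₁ * a₂ < a₃) :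
    ∃ z : ℂ, z ^ 3 + (a₁ : ℂ) * z ^ 2 + (a₂ : ℂ) * z + (a₃ : ℂ) = 0 ∧ 0 < z.re := by
  -- Step 1: find a negative real root r of the cubic.
  obtain ⟨r, hr0, hrneg⟩ :
      ∃ r : ℝ, r ^ 3 + a₁ * r ^ 2 + a₂ * r + a₃ = 0 ∧ r < 0 := by
    set f : ℝ → ℝ := fun x => x ^ 3 + a₁ * x ^ 2 + a₂ * x + a₃ with hf
    set M : ℝ := max (a₁ + 1) (max 1 a₃) with hM
    have hM1 : (1:ℝ) ≤ M := le_trans (le_max_left 1 a₃) (le_max_right _ _)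
    have hMa1 : a₁ + 1 ≤ M := le_max_left _ _
    have hMa3 : a₃ ≤ M := le_trans (le_max_right 1 a₃) (le_max_right _ _)
    have hcont : ContinuousOn f (Set.Icc (-M) 0) := by fun_prop
    have hle : (-M) ≤ (0:ℝ) := by linarith
    have hneg : f (-M) < 0 := by
      simp only [hf]
      nlinarith [mul_pos h₂ (lt_of_lt_of_le one_pos hM1), sq_nonneg M,
        mul_le_mul_of_nonneg_left hMa3 (le_trans zero_le_one hM1)]
    have hmem : (0:ℝ) ∈ Set.Icc (f (-M)) (f 0) := by
      constructor
      · exact le_of_lt hneg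
      · simp [hf]; positivity
    obtain ⟨r, hrmem, hfr⟩ := intermediate_value_Icc hle hcont hmem
    refine ⟨r, hfr, ?_⟩
    rcases lt_or_eq_of_le hrmem.2 with h' | h'
    · exact h'
    · exfalso
      rw [h'] at hfr
      simp [hf] at hfr
      linarith
  -- Step 2: the quadratic cofactor z² + p z + q, with p = a₁ + r, q = a₂ + r p.
  have hq : 0 < a₂ + r * (a₁ + r) := by nlinarith
  have hp : a₁ + r < 0 := by
    by_contra hcon
    push_neg at hcon
    nlinarith [mul_nonneg hcon (by positivity : (0:ℝ) ≤ a₂ + r ^ 2)]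
  have hrC : (r:ℂ) ^ 3 + (a₁:ℂ) * (r:ℂ) ^ 2 + (a₂:ℂ) * r + a₃ = 0 := by
    exact_mod_cast congrArg (fun x : ℝ => (x : ℂ)) hr0
  by_cases hdisc : 4 * (a₂ + r * (a₁ + r)) ≤ (a₁ + r) ^ 2
  · -- real roots of the quadratic
    set s : ℝ := Real.sqrt ((a₁ + r) ^ 2 - 4 * (a₂ + r * (a₁ + r))) with hs_def
    have hs0 : 0 ≤ s := Real.sqrt_nonneg _
    have hs : s ^ 2 = (a₁ + r) ^ 2 - 4 * (a₂ + r * (a₁ + r)) :=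
      Real.sq_sqrt (by linarith)
    set x : ℝ := (-(a₁ + r) + s) / 2 with hx_def
    have hxr : x ^ 2 + (a₁ + r) * x + (a₂ + r * (a₁ + r)) = 0 := by
      rw [hx_def]; linear_combination hs / 4
    have hz : (x:ℂ) ^ 2 + ((a₁:ℂ) + r) * x + ((a₂:ℂ) + r * ((a₁:ℂ) + r)) = 0 := by
      exact_mod_cast congrArg (fun y : ℝ => (y : ℂ)) hxr
    refine ⟨(x:ℂ), ?_, ?_⟩
    · linear_combination ((x:ℂ) - r) * hz + hrC
    · simp only [Complex.ofReal_re]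
      rw [hx_def]
      nlinarith
  · -- complex conjugate pair
    push_neg at hdisc
    set t : ℝ := Real.sqrt (4 * (a₂ + r * (a₁ + r)) - (a₁ + r) ^ 2) with ht_def
    have ht : t ^ 2 = 4 * (a₂ + r * (a₁ + r)) - (a₁ + r) ^ 2 :=
      Real.sq_sqrt (by linarith)
    have htC : (t:ℂ) ^ 2 = 4 * ((a₂:ℂ) + r * ((a₁:ℂ) + r)) - ((a₁:ℂ) + r) ^ 2 := by
      exact_mod_cast congrArg (fun y : ℝ => (y : ℂ)) ht
    set z : ℂ := (↑(-(a₁ + r) / 2) : ℂ) + (↑(t / 2) : ℂ) * Complex.I with hz_def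
    have hz : z ^ 2 + ((a₁:ℂ) + r) * z + ((a₂:ℂ) + r * ((a₁:ℂ) + r)) = 0 := by
      rw [hz_def]
      push_cast
      linear_combination ((t:ℂ) ^ 2 / 4) * Complex.I_sq - (1/4 : ℂ) * htC
    refine ⟨z, ?_, ?_⟩
    · linear_combination (z - (r:ℂ)) * hz + hrC
    · rw [hz_def]
      simp [Complex.add_re, Complex.mul_re]
      linarith
end

section
/- Let μ, β, ν, θ, γ, k, I* be positive reals and p* ∈ (0,1). Set q₁ = μ + βI*, q₂ = (ν+μ)βI*, q₃ = γ/p* + p*. Then the characteristic polynomial of the 3×3 real matrix J with rows (−q₁, −(ν+μ), −μ), (βI*, 0, 0), (k p*(1−p*)θβI*, k p*(1−p*)θ(ν+μ), −k(1−p*)q₃) equals λ³ + a₁λ² + a₂λ + a₃, where a₁ = k(1−p*)q₃ + q₁, a₂ = k(1−p*)(q₁q₃ + θμp*βI*) + q₂, and a₃ = k(1−p*)q₂(q₃ + θμp*). -/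
open Polynomial

/-- The characteristic polynomial of the Jacobian of the SIR model with
evolutionary vaccination game at its endemic equilibrium is
`λ³ + a₁ λ² + a₂ λ + a₃` with the indicated coefficients. -/
theorem charpoly_jacobian_endemic (μ β ν θ γ k Istar : ℝ) (pstar : ℝ)
    (hμ : 0 < μ) (hβ : 0 < β) (hν : 0 < ν) (hθ : 0 < θ) (hγ : 0 < γ)
    (hk : 0 < k) (hI : 0 < Istar) (hp : pstar ∈ Set.Ioo (0 : ℝ) 1) :
    let q₁ : ℝ := μ + β * Istar
    let q₂ : ℝ := (ν + μ) * (β * Istar)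
    let q₃ : ℝ := γ / pstar + pstar
    let J : Matrix (Fin 3) (Fin 3) ℝ :=
      !![-q₁, -(ν + μ), -μ;
         β * Istar, 0, 0;
         k * pstar * (1 - pstar) * θ * (β * Istar),
           k * pstar * (1 - pstar) * θ * (ν + μ),
           -(k * (1 - pstar) * q₃)]
    let a₁ : ℝ := k * (1 - pstar) * q₃ + q₁
    let a₂ : ℝ := k * (1 - pstar) * (q₁ * q₃ + θ * μ * pstar * (β * Istar)) + q₂
    let a₃ : ℝ := k * (1 - pstar) * q₂ * (q₃ + θ * μ * pstar)
    J.charpoly = X ^ 3 + C a₁ * X ^ 2 + C a₂ * X + C a₃ := by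
  intro q₁ q₂ q₃ J a₁ a₂ a₃
  rw [Matrix.charpoly, Matrix.det_fin_three]
  simp only [J, Matrix.charmatrix_apply_eq, Matrix.charmatrix_apply_ne, Matrix.cons_val', Matrix.cons_val_zero,
    Matrix.cons_val_one, Matrix.head_cons, Matrix.head_fin_const, Matrix.empty_val',
    Matrix.cons_val_fin_one, Matrix.cons_val_two, Matrix.tail_cons, ne_eq, Fin.reduceEq,
    not_false_eq_true, Matrix.of_apply]
  simp only [a₁, a₂, a₃, q₁, q₂, q₃, map_add, map_mul, map_sub, map_neg, map_one, map_zero]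
  ring
end

section
/- Let μ, β, ν, θ, γ, I* be positive reals and p* ∈ (0,1). Set q₁ = μ + βI*, q₂ = (ν+μ)βI*, q₃ = γ/p* + p*, and W = q₁²q₃ + θμp*βI*(βI* − ν) + 2√(q₁q₂q₃(q₁q₃ + θμp*βI*)). For k > 0 let a₁(k) = k(1−p*)q₃ + q₁, a₂(k) = k(1−p*)(q₁q₃ + θμp*βI*) + q₂, a₃(k) = k(1−p*)q₂(q₃ + θμp*). If W < 0, then there exist 0 < k₁ < k₂ such that: for every k ∈ (k₁, k₂) the polynomial λ³ + a₁(k)λ² + a₂(k)λ + a₃(k) has a complex root with strictly positive real part; for every k ∈ (0, k₁) ∪ (k₂, ∞) all its complex roots have strictly negative real part; and for k ∈ {k₁, k₂} it has the pair of purely imaginary roots ±i√(a₂(k)). -/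
/-!
Routh–Hurwitz for cubics: if `z³ + a z² + b z + c` has `a, b ≥ 0`, `c > 0`, then all its roots
lie in the open left half-plane when `a b > c`, some root lies in the open right half-plane when
`a b < c`, and `± i √b` are roots when `a b = c`. Writing the cubic as `(z - r)` times a real
quadratic, with `r` a real root, this follows from `(a + r)(r² + b) = a b - c`, which fixes the
sign of the real part of the quadratic's roots.

Along the family, the Hurwitz determinant `a₁ a₂ - a₃` is the quadratic
`(1 - p*)² q₃ Q k² + (1 - p*) B k + q₁ q₂` with `Q = q₁ q₃ + θ μ p* β I*` and
`W = B + 2 √(q₁ q₂ q₃ Q)`. Hence `W < 0` gives `B < 0` and a positive discriminant: the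
determinant has two positive roots `k₁ < k₂` and is negative exactly between them.
-/

theorem exists_cubic_eq_zero (a b c : ℝ) : ∃ r : ℝ, r ^ 3 + a * r ^ 2 + b * r + c = 0 := by
  set M : ℝ := 1 + |a| + |b| + |c|
  have hM : 1 ≤ M := by linarith [abs_nonneg a, abs_nonneg b, abs_nonneg c]
  have hcont : Continuous fun x : ℝ => x ^ 3 + a * x ^ 2 + b * x + c := by fun_prop
  have hends : (-M) ^ 3 + a * (-M) ^ 2 + b * (-M) + c ≤ 0 ∧
      0 ≤ M ^ 3 + a * M ^ 2 + b * M + c := by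
    constructor <;> nlinarith [abs_nonneg a, abs_nonneg b, abs_nonneg c, le_abs_self a,
      neg_abs_le a, le_abs_self b, neg_abs_le b, le_abs_self c, neg_abs_le c, sq_nonneg M]
  obtain ⟨r, -, hr⟩ := intermediate_value_Icc (by linarith) hcont.continuousOn hends
  exact ⟨r, hr⟩

theorem cubic_eq_mul_quadratic {R : Type*} [CommRing R] {a b c r : R}
    (hr : r ^ 3 + a * r ^ 2 + b * r + c = 0) (z : R) :
    z ^ 3 + a * z ^ 2 + b * z + c = (z - r) * (z ^ 2 + (a + r) * z + (b + a * r + r ^ 2)) := by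
  linear_combination hr

theorem cubic_hurwitz_identity {R : Type*} [CommRing R] {a b c r : R}
    (hr : r ^ 3 + a * r ^ 2 + b * r + c = 0) : (a + r) * (r ^ 2 + b) = a * b - c := by
  linear_combination hr

theorem neg_of_cubic_eq_zero {a b c x : ℝ} (ha : 0 ≤ a) (hb : 0 ≤ b) (hc : 0 < c)
    (hx : x ^ 3 + a * x ^ 2 + b * x + c = 0) : x < 0 := by
  by_contra! h
  nlinarith [pow_nonneg h 3, mul_nonneg ha (sq_nonneg x), mul_nonneg hb h]

theorem Complex.re_eq_of_quadratic_eq_zero {p q : ℝ} {z : ℂ} (hz : z ^ 2 + p * z + q = 0)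
    (him : z.im ≠ 0) : z.re = -p / 2 := by
  have him_eq : z.im * (2 * z.re + p) = 0 := by
    have him_hz := congrArg Complex.im hz
    simp only [pow_two, Complex.add_im, Complex.mul_im, Complex.ofReal_re, Complex.ofReal_im,
      zero_mul, add_zero, Complex.zero_im] at him_hz
    linear_combination him_hz
  linarith [(mul_eq_zero.mp him_eq).resolve_left him]

theorem Complex.exists_quadratic_eq_zero_le_re (p q : ℂ) :
    ∃ z : ℂ, z ^ 2 + p * z + q = 0 ∧ -p.re / 2 ≤ z.re := by
  obtain ⟨s, hs⟩ := IsAlgClosed.exists_eq_mul_self (p ^ 2 - 4 * q)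
  rcases le_total 0 s.re with h | h
  · refine ⟨(-p + s) / 2, by linear_combination -hs / 4, ?_⟩
    simp only [Complex.div_ofNat_re, Complex.add_re, Complex.neg_re]
    linarith
  · refine ⟨(-p - s) / 2, by linear_combination -hs / 4, ?_⟩
    simp only [Complex.div_ofNat_re, Complex.sub_re, Complex.neg_re]
    linarith

theorem cubic_re_neg_of_lt_mul {a b c : ℝ} (ha : 0 ≤ a) (hb : 0 ≤ b) (hc : 0 < c)
    (habc : c < a * b) {z : ℂ} (hz : z ^ 3 + a * z ^ 2 + b * z + c = 0) : z.re < 0 := by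
  obtain ⟨r, hr⟩ := exists_cubic_eq_zero a b c
  by_cases him : z.im = 0
  · have hz_real : z = z.re := Complex.ext rfl (by simp [him])
    rw [hz_real] at hz
    exact neg_of_cubic_eq_zero ha hb hc (by exact_mod_cast hz)
  · have har : 0 < a + r :=
      pos_of_mul_pos_left (b := r ^ 2 + b) (by linarith [cubic_hurwitz_identity hr])
        (by positivity)
    have hquad : z ^ 2 + ((a + r : ℝ) : ℂ) * z + ((b + a * r + r ^ 2 : ℝ) : ℂ) = 0 := by
      have hrC : (r : ℂ) ^ 3 + a * (r : ℂ) ^ 2 + b * r + c = 0 := by exact_mod_cast hr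
      have hne : z - r ≠ 0 := fun h => him (by simp [sub_eq_zero.mp h])
      push_cast
      exact (mul_eq_zero.mp ((cubic_eq_mul_quadratic hrC z).symm.trans hz)).resolve_left hne
    linarith [Complex.re_eq_of_quadratic_eq_zero hquad him]

theorem exists_cubic_eq_zero_re_pos {a b c : ℝ} (hb : 0 ≤ b) (habc : a * b < c) :
    ∃ z : ℂ, z ^ 3 + a * z ^ 2 + b * z + c = 0 ∧ 0 < z.re := by
  obtain ⟨r, hr⟩ := exists_cubic_eq_zero a b c
  have har : a + r < 0 :=
    neg_of_mul_neg_left (b := r ^ 2 + b) (by linarith [cubic_hurwitz_identity hr]) (by positivity)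
  have hrC : (r : ℂ) ^ 3 + a * (r : ℂ) ^ 2 + b * r + c = 0 := by exact_mod_cast hr
  obtain ⟨z, hz, hre⟩ := Complex.exists_quadratic_eq_zero_le_re (a + r) (b + a * r + r ^ 2)
  refine ⟨z, by rw [cubic_eq_mul_quadratic hrC, hz, mul_zero], ?_⟩
  simp only [Complex.add_re, Complex.ofReal_re] at hre
  linarith

theorem cubic_eq_zero_of_eq_mul {a b c : ℝ} (hb : 0 ≤ b) (habc : c = a * b) {z : ℂ}
    (hz : z = Complex.I * (√b : ℂ) ∨ z = -(Complex.I * (√b : ℂ))) :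
    z ^ 3 + a * z ^ 2 + b * z + c = 0 := by
  have hsq : (√b : ℂ) ^ 2 = b := by exact_mod_cast Real.sq_sqrt hb
  have hz2 : z ^ 2 = -b := by
    rcases hz with rfl | rfl <;> linear_combination (√b : ℂ) ^ 2 * Complex.I_sq - hsq
  rw [habc]
  push_cast
  linear_combination (z + a) * hz2

theorem neg_and_four_mul_lt_sq_of_add_two_sqrt_neg {B D : ℝ} (hD : 0 ≤ D)
    (h : B + 2 * √D < 0) : B < 0 ∧ 4 * D < B ^ 2 := by
  have hsq : √D ^ 2 = D := Real.sq_sqrt hD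
  have hs : 0 ≤ √D := Real.sqrt_nonneg D
  refine ⟨by linarith, ?_⟩
  nlinarith

theorem exists_pos_roots_of_discrim_pos {A B C : ℝ} (hA : 0 < A) (hB : B < 0) (hC : 0 < C)
    (hdisc : 0 < discrim A B C) :
    ∃ x₁ x₂ : ℝ, 0 < x₁ ∧ x₁ < x₂ ∧ ∀ x, A * x ^ 2 + B * x + C = A * (x - x₁) * (x - x₂) := by
  set s := √(discrim A B C)
  have hs : 0 < s := Real.sqrt_pos.mpr hdisc
  have hs2 : s ^ 2 = B ^ 2 - 4 * A * C := Real.sq_sqrt hdisc.le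
  -- `s < -B` because `s ^ 2 = B ^ 2 - 4AC < B ^ 2`
  have hsB : s < -B := by nlinarith
  refine ⟨(-B - s) / (2 * A), (-B + s) / (2 * A), by positivity, ?_, fun x => ?_⟩
  · gcongr
    linarith
  · field_simp
    linear_combination hs2

theorem cubic_family_hopf {a₁ a₂ a₃ : ℝ → ℝ} {A k₁ k₂ : ℝ} (ha₁ : ∀ k, 0 < k → 0 ≤ a₁ k)
    (ha₂ : ∀ k, 0 < k → 0 ≤ a₂ k) (ha₃ : ∀ k, 0 < k → 0 < a₃ k) (hA : 0 < A) (hk₁ : 0 < k₁)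
    (hk₁₂ : k₁ < k₂)
    (hH : ∀ k, a₁ k * a₂ k - a₃ k = A * (k - k₁) * (k - k₂)) :
    (∀ k : ℝ, k₁ < k → k < k₂ →
      ∃ z : ℂ, z ^ 3 + (a₁ k : ℂ) * z ^ 2 + (a₂ k : ℂ) * z + (a₃ k : ℂ) = 0 ∧ 0 < z.re) ∧
    (∀ k : ℝ, (0 < k ∧ k < k₁) ∨ k₂ < k →
      ∀ z : ℂ, z ^ 3 + (a₁ k : ℂ) * z ^ 2 + (a₂ k : ℂ) * z + (a₃ k : ℂ) = 0 → z.re < 0) ∧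
    (∀ k : ℝ, k = k₁ ∨ k = k₂ →
      ∀ z : ℂ, z = Complex.I * (√(a₂ k) : ℂ) ∨ z = -(Complex.I * (√(a₂ k) : ℂ)) →
        z ^ 3 + (a₁ k : ℂ) * z ^ 2 + (a₂ k : ℂ) * z + (a₃ k : ℂ) = 0) := by
  refine ⟨fun k hk₁k hkk₂ => ?_, fun k hk z hz => ?_, fun k hk z hz => ?_⟩
  · have hneg : a₁ k * a₂ k - a₃ k < 0 := by
      rw [hH]
      exact mul_neg_of_pos_of_neg (mul_pos hA (by linarith)) (by linarith)
    exact exists_cubic_eq_zero_re_pos (ha₂ k (by linarith)) (by linarith)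
  · have hk0 : 0 < k := by rcases hk with ⟨hk, -⟩ | hk <;> linarith
    have hpos : 0 < a₁ k * a₂ k - a₃ k := by
      rw [hH]
      rcases hk with ⟨-, hk⟩ | hk
      · exact mul_pos_of_neg_of_neg (mul_neg_of_pos_of_neg hA (by linarith)) (by linarith)
      · exact mul_pos (mul_pos hA (by linarith)) (by linarith)
    exact cubic_re_neg_of_lt_mul (ha₁ k hk0) (ha₂ k hk0) (ha₃ k hk0) (by linarith) hz
  · have hk0 : 0 < k := by rcases hk with rfl | rfl <;> linarith
    have hzero : a₁ k * a₂ k - a₃ k = 0 := by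
      rw [hH]
      rcases hk with rfl | rfl <;> ring
    exact cubic_eq_zero_of_eq_mul (ha₂ k hk0) (by linarith) hz
/-- Unstable case of Theorem 3.1: if the stability discriminant `W` is
negative, then there exist `0 < k₁ < k₂` such that the characteristic
polynomial has a root with positive real part for `k ∈ (k₁, k₂)`, only
roots with negative real part for `k ∈ (0, k₁) ∪ (k₂, ∞)`, and the pair of
purely imaginary roots `± i √(a₂(k))` for `k ∈ {k₁, k₂}`. -/
theorem endemic_equilibrium_hopf (μ β ν θ γ Istar : ℝ) (pstar : ℝ)
    (hμ : 0 < μ) (hβ : 0 < β) (hν : 0 < ν) (hθ : 0 < θ) (hγ : 0 < γ)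
    (hI : 0 < Istar) (hp : pstar ∈ Set.Ioo (0 : ℝ) 1) :
    let q₁ : ℝ := μ + β * Istar
    let q₂ : ℝ := (ν + μ) * (β * Istar)
    let q₃ : ℝ := γ / pstar + pstar
    let W : ℝ := q₁ ^ 2 * q₃ + θ * μ * pstar * (β * Istar) * (β * Istar - ν)
      + 2 * Real.sqrt (q₁ * q₂ * q₃ * (q₁ * q₃ + θ * μ * pstar * (β * Istar)))
    let a₁ : ℝ → ℝ := fun k => k * (1 - pstar) * q₃ + q₁
    let a₂ : ℝ → ℝ := fun k =>
      k * (1 - pstar) * (q₁ * q₃ + θ * μ * pstar * (β * Istar)) + q₂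
    let a₃ : ℝ → ℝ := fun k => k * (1 - pstar) * q₂ * (q₃ + θ * μ * pstar)
    W < 0 →
      ∃ k₁ k₂ : ℝ, 0 < k₁ ∧ k₁ < k₂ ∧
        (∀ k : ℝ, k₁ < k → k < k₂ →
          ∃ z : ℂ, z ^ 3 + (a₁ k : ℂ) * z ^ 2 + (a₂ k : ℂ) * z + (a₃ k : ℂ) = 0 ∧
            0 < z.re) ∧
        (∀ k : ℝ, (0 < k ∧ k < k₁) ∨ k₂ < k →
          ∀ z : ℂ, z ^ 3 + (a₁ k : ℂ) * z ^ 2 + (a₂ k : ℂ) * z + (a₃ k : ℂ) = 0 →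
            z.re < 0) ∧
        (∀ k : ℝ, k = k₁ ∨ k = k₂ →
          ∀ z : ℂ, z = Complex.I * (Real.sqrt (a₂ k) : ℂ) ∨
              z = -(Complex.I * (Real.sqrt (a₂ k) : ℂ)) →
            z ^ 3 + (a₁ k : ℂ) * z ^ 2 + (a₂ k : ℂ) * z + (a₃ k : ℂ) = 0) := by
  intro q₁ q₂ q₃ W a₁ a₂ a₃ hW
  obtain ⟨hp₀, hp₁⟩ := hp
  have h1p : 0 < 1 - pstar := sub_pos.mpr hp₁
  have hq₁ : 0 < q₁ := by positivity
  have hq₂ : 0 < q₂ := by positivity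
  have hq₃ : 0 < q₃ := by positivity
  set Q := q₁ * q₃ + θ * μ * pstar * (β * Istar)
  set B := q₁ ^ 2 * q₃ + θ * μ * pstar * (β * Istar) * (β * Istar - ν)
  have hQ : 0 < Q := by positivity
  have hurwitz : ∀ k, a₁ k * a₂ k - a₃ k
      = ((1 - pstar) ^ 2 * (q₃ * Q)) * k ^ 2 + ((1 - pstar) * B) * k + q₁ * q₂ := by
    intro k
    simp only [a₁, a₂, a₃, Q, B, q₁, q₂]
    ring
  obtain ⟨hB, hBQ⟩ := neg_and_four_mul_lt_sq_of_add_two_sqrt_neg (B := B)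
    (D := q₁ * q₂ * q₃ * Q) (by positivity) hW
  have hdisc : 0 < discrim ((1 - pstar) ^ 2 * (q₃ * Q)) ((1 - pstar) * B) (q₁ * q₂) := by
    rw [discrim]
    nlinarith [mul_pos (pow_pos h1p 2) (sub_pos.mpr hBQ)]
  obtain ⟨k₁, k₂, hk₁, hk₁₂, hfactor⟩ := exists_pos_roots_of_discrim_pos (by positivity)
    (mul_neg_of_pos_of_neg h1p hB) (by positivity) hdisc
  exact ⟨k₁, k₂, hk₁, hk₁₂, cubic_family_hopf (fun k hk => by positivity)
    (fun k hk => by positivity) (fun k hk => by positivity) (by positivity) hk₁ hk₁₂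
    fun k => (hurwitz k).trans (hfactor k)⟩
end

section
/- Let γ > 0, δ ≥ 0, θμ > 0 and p_c ∈ (0,1), and set p* = (δ + θμp_c + √((δ + θμp_c)² + 4γ(1 + θμ)))/(2(1 + θμ)) and γ_c = p_c(p_c − δ). Then p* < p_c if and only if γ < γ_c; equivalently, for any ν + μ > 0 and μ > 0, the quantity I* = (μ/(ν+μ))(p_c − p*) is strictly positive if and only if γ < γ_c. -/
/-- Existence threshold for the endemic equilibrium: `p* < p_c` iff
`γ < γ_c = p_c (p_c − δ)`; equivalently, `I* = (μ/(ν+μ))(p_c − p*) > 0`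
iff `γ < γ_c`. -/
theorem endemic_uptake_threshold (γ δ θ μ pc : ℝ) (hγ : 0 < γ) (hδ : 0 ≤ δ)
    (hθμ : 0 < θ * μ) (hpc : pc ∈ Set.Ioo (0 : ℝ) 1) :
    let pstar : ℝ := (δ + θ * μ * pc
      + Real.sqrt ((δ + θ * μ * pc) ^ 2 + 4 * γ * (1 + θ * μ))) / (2 * (1 + θ * μ))
    let γc : ℝ := pc * (pc - δ)
    (pstar < pc ↔ γ < γc) ∧
    (∀ ν : ℝ, 0 < ν + μ → 0 < μ →
      (0 < μ / (ν + μ) * (pc - pstar) ↔ γ < γc)) := by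
  intro pstar γc
  obtain ⟨hpc0, hpc1⟩ := hpc
  set b : ℝ := 1 + θ * μ with hbdef
  have hb : 0 < b := by positivity
  set a : ℝ := δ + θ * μ * pc with hadef
  have ha : 0 ≤ a := by
    have : 0 ≤ θ * μ * pc := by positivity
    simp [hadef]; linarith
  set s : ℝ := Real.sqrt (a ^ 2 + 4 * γ * b) with hsdef
  have hs0 : 0 ≤ s := Real.sqrt_nonneg _
  have hs2 : s ^ 2 = a ^ 2 + 4 * γ * b := by
    rw [hsdef, Real.sq_sqrt]; positivity
  have key : pstar < pc ↔ γ < γc := by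
    constructor
    · intro h
      have h' : a + s < 2 * b * pc := by
        have := (div_lt_iff₀ (by linarith : (0:ℝ) < 2 * b)).mp h
        linarith
      have hsq : s ^ 2 < (2 * b * pc - a) ^ 2 := by
        nlinarith [hs0]
      rw [hs2] at hsq
      simp only [hbdef, hadef] at hsq
      show γ < pc * (pc - δ)
      nlinarith [hpc0, hθμ, hsq]
    · intro h
      have hpcδ : 0 < pc - δ := by
        by_contra hc
        push_neg at hc
        have h' : γ < pc * (pc - δ) := h
        nlinarith [mul_nonpos_of_nonneg_of_nonpos hpc0.le hc]
      have hy : 0 < 2 * b * pc - a := by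
        simp only [hbdef, hadef]; nlinarith
      have hlt : a ^ 2 + 4 * γ * b < (2 * b * pc - a) ^ 2 := by
        simp only [hbdef, hadef, γc] at h ⊢; nlinarith
      have hs : s < 2 * b * pc - a := by
        rw [hsdef]
        exact (Real.sqrt_lt' hy).mpr hlt
      show (a + s) / (2 * b) < pc
      rw [div_lt_iff₀ (by linarith : (0:ℝ) < 2 * b)]
      linarith
  refine ⟨key, fun ν hν hμ => ?_⟩
  have hc : 0 < μ / (ν + μ) := div_pos hμ hν
  rw [← key]
  constructor
  · intro h
    nlinarith [h, hc]
  · intro h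
    exact mul_pos hc (by linarith)
end

section
/- Let μ, ν, θ, γ, k > 0, δ ≥ 0, β > ν + μ, set R₀ = β/(ν+μ), p_c = 1 − 1/R₀, and assume γ < p_c(p_c − δ). Define p* = (δ + θμp_c + √((δ + θμp_c)² + 4γ(1 + θμ)))/(2(1 + θμ)), S* = (ν+μ)/β, and I* = (μ/(ν+μ))(p_c − p*). Then 0 < p* < 1, I* > 0, and (S*, I*, p*) is an equilibrium of the system, i.e. μ(1 − p*) − μS* − βS*I* = 0, βS*I* − (ν+μ)I* = 0, and k(p*(1 − p*)(δ + θβS*I* − p*) + γ(1 − p*)) = 0. -/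
/-!
`p*` is the positive root of `(1 + θμ) p² = (δ + θμ p_c) p + γ`, which is exactly what the
vaccination equation becomes once `β S* I* = μ (p_c − p*)` is substituted. Since `γ > 0` the two
roots have opposite signs, so `p* > 0`; and `p* < p_c < 1` because the quadratic is positive at
`p_c`, which is the condition `γ < p_c (p_c − δ)`.
-/

open Real

/-- The positive root of `a x² - b x - c` when `a, c > 0`. -/
noncomputable def posRoot (a b c : ℝ) : ℝ := (b + √(b ^ 2 + 4 * c * a)) / (2 * a)

section posRoot

variable {a b c : ℝ}

theorem two_mul_mul_posRoot (ha : 0 < a) : 2 * a * posRoot a b c = b + √(b ^ 2 + 4 * c * a) := by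
  unfold posRoot
  field_simp

theorem mul_posRoot_sq (ha : 0 < a) (hc : 0 ≤ c) :
    a * posRoot a b c ^ 2 = b * posRoot a b c + c := by
  have hs : √(b ^ 2 + 4 * c * a) ^ 2 = b ^ 2 + 4 * c * a := sq_sqrt (by positivity)
  have h := two_mul_mul_posRoot (b := b) (c := c) ha
  apply mul_left_cancel₀ (show 4 * a ≠ 0 by positivity)
  linear_combination (2 * a * posRoot a b c - b + √(b ^ 2 + 4 * c * a)) * h + hs

theorem posRoot_pos (ha : 0 < a) (hc : 0 < c) : 0 < posRoot a b c := by
  have hs : |b| < √(b ^ 2 + 4 * c * a) := by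
    rw [← sqrt_sq_eq_abs]
    exact sqrt_lt_sqrt (sq_nonneg b) (by nlinarith)
  have h := two_mul_mul_posRoot (b := b) (c := c) ha
  have : 0 < 2 * a * posRoot a b c := by rw [h]; linarith [neg_abs_le b]
  exact pos_of_mul_pos_right this (by positivity)

theorem posRoot_lt (ha : 0 < a) (hc : 0 < c) {x : ℝ} (hx : 0 < x) (hcx : c < x * (a * x - b)) :
    posRoot a b c < x := by
  have hax : 0 < a * x - b := by nlinarith
  have hs : √(b ^ 2 + 4 * c * a) < 2 * a * x - b :=
    (sqrt_lt' (by nlinarith)).mpr (by nlinarith)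
  have h := two_mul_mul_posRoot (b := b) (c := c) ha
  have : 2 * a * posRoot a b c < 2 * a * x := by rw [h]; linarith
  exact lt_of_mul_lt_mul_left this (by positivity)

end posRoot

theorem endemic_equilibrium_exists_general (μ ν θ γ k δ β : ℝ)
    (hμ : 0 < μ) (hν : 0 < ν) (hθ : 0 < θ) (hγ : 0 < γ)
    (hβ : ν + μ < β) :
    let R0 : ℝ := β / (ν + μ)
    let pc : ℝ := 1 - 1 / R0
    let pstar : ℝ := (δ + θ * μ * pc
      + Real.sqrt ((δ + θ * μ * pc) ^ 2 + 4 * γ * (1 + θ * μ))) / (2 * (1 + θ * μ))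
    let Sstar : ℝ := (ν + μ) / β
    let Istar : ℝ := μ / (ν + μ) * (pc - pstar)
    γ < pc * (pc - δ) →
      (0 < pstar ∧ pstar < 1) ∧ 0 < Istar ∧
      μ * (1 - pstar) - μ * Sstar - β * Sstar * Istar = 0 ∧
      β * Sstar * Istar - (ν + μ) * Istar = 0 ∧
      k * (pstar * (1 - pstar) * (δ + θ * (β * Sstar * Istar) - pstar)
        + γ * (1 - pstar)) = 0 := by
  intro R0 pc pstar Sstar Istar hγc
  have hνμ : 0 < ν + μ := by linarith
  have hβ0 : 0 < β := by linarith
  have hpc : pc = 1 - (ν + μ) / β := by simp only [pc, R0, one_div_div]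
  have hpc0 : 0 < pc := by linarith [(div_lt_one hβ0).2 hβ]
  have hpc1 : pc < 1 := by linarith [div_pos hνμ hβ0]
  have ha : 0 < 1 + θ * μ := by positivity
  have hp0 : 0 < pstar := posRoot_pos ha hγ
  have hppc : pstar < pc := posRoot_lt ha hγ hpc0 (by linarith)
  have hquad : (1 + θ * μ) * pstar ^ 2 = (δ + θ * μ * pc) * pstar + γ :=
    mul_posRoot_sq ha hγ.le
  have hSI : β * Sstar * Istar = μ * (pc - pstar) := by
    simp only [Sstar, Istar]
    field_simp
  refine ⟨⟨hp0, hppc.trans hpc1⟩, mul_pos (div_pos hμ hνμ) (sub_pos.2 hppc), ?_, ?_, ?_⟩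
  · have hS : Sstar = 1 - pc := by rw [hpc]; ring
    rw [hSI, hS]
    ring
  · rw [hSI]
    simp only [Istar]
    field_simp
    ring
  · rw [hSI]
    linear_combination (-k * (1 - pstar)) * hquad

/-- The endemic equilibrium `(S*, I*, p*)` of the SIR model with
evolutionary vaccination game: under `γ < γ_c = p_c (p_c − δ)` it satisfies
`0 < p* < 1`, `I* > 0`, and annihilates the right-hand sides of the system. -/
theorem endemic_equilibrium_exists (μ ν θ γ k δ β : ℝ)
    (hμ : 0 < μ) (hν : 0 < ν) (hθ : 0 < θ) (hγ : 0 < γ) (hk : 0 < k)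
    (hδ : 0 ≤ δ) (hβ : ν + μ < β) :
    let R0 : ℝ := β / (ν + μ)
    let pc : ℝ := 1 - 1 / R0
    let pstar : ℝ := (δ + θ * μ * pc
      + Real.sqrt ((δ + θ * μ * pc) ^ 2 + 4 * γ * (1 + θ * μ))) / (2 * (1 + θ * μ))
    let Sstar : ℝ := (ν + μ) / β
    let Istar : ℝ := μ / (ν + μ) * (pc - pstar)
    γ < pc * (pc - δ) →
      (0 < pstar ∧ pstar < 1) ∧ 0 < Istar ∧
      μ * (1 - pstar) - μ * Sstar - β * Sstar * Istar = 0 ∧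
      β * Sstar * Istar - (ν + μ) * Istar = 0 ∧
      k * (pstar * (1 - pstar) * (δ + θ * (β * Sstar * Istar) - pstar)
        + γ * (1 - pstar)) = 0 :=
  endemic_equilibrium_exists_general μ ν θ γ k δ β hμ hν hθ hγ hβ
end

section
/- Let μ, β, ν, θ, k, γ > 0 and δ ∈ [0,1) with γ > 1 − δ. Let S, I, p : [0,∞) → ℝ be differentiable functions satisfying, for all τ ≥ 0, S′(τ) = μ(1−p(τ)) − μS(τ) − βS(τ)I(τ), I′(τ) = βS(τ)I(τ) − (ν+μ)I(τ), p′(τ) = k(p(τ)(1−p(τ))(δ + θβS(τ)I(τ) − p(τ)) + γ(1−p(τ))), together with S(τ) ≥ 0, I(τ) ≥ 0 and p(τ) ∈ [0,1] for all τ ≥ 0. Then p(τ) → 1 as τ → ∞. -/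
open Filter

/-- Global attractivity of the pure-vaccinator disease-free equilibrium
`E^P = (0, 0, 1)`: if `γ > 1 − δ`, then along every solution of the SIR
model with evolutionary vaccination game the vaccine uptake `p(τ) → 1`. -/
theorem pure_vaccinator_global_attractivity (μ β ν θ k γ δ : ℝ)
    (hμ : 0 < μ) (hβ : 0 < β) (hν : 0 < ν) (hθ : 0 < θ) (hk : 0 < k)
    (hγ : 0 < γ) (hδ : δ ∈ Set.Ico (0 : ℝ) 1) (hγδ : 1 - δ < γ)
    (S I p : ℝ → ℝ)
    (hS : ∀ τ : ℝ, 0 ≤ τ →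
      HasDerivAt S (μ * (1 - p τ) - μ * S τ - β * S τ * I τ) τ)
    (hI : ∀ τ : ℝ, 0 ≤ τ →
      HasDerivAt I (β * S τ * I τ - (ν + μ) * I τ) τ)
    (hp : ∀ τ : ℝ, 0 ≤ τ →
      HasDerivAt p
        (k * (p τ * (1 - p τ) * (δ + θ * (β * S τ * I τ) - p τ)
          + γ * (1 - p τ))) τ)
    (hSnn : ∀ τ : ℝ, 0 ≤ τ → 0 ≤ S τ)
    (hInn : ∀ τ : ℝ, 0 ≤ τ → 0 ≤ I τ)
    (hpmem : ∀ τ : ℝ, 0 ≤ τ → p τ ∈ Set.Icc (0 : ℝ) 1) :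
    Tendsto p atTop (nhds 1) := by
  obtain ⟨hδ0, hδ1⟩ := hδ
  set c : ℝ := k * (γ - (1 - δ)) with hc
  have hcpos : 0 < c := mul_pos hk (by linarith)
  set f : ℝ → ℝ := fun τ => (1 - p τ) * Real.exp (c * τ) with hf
  -- derivative of f on [0, ∞)
  have hfderiv : ∀ τ : ℝ, 0 ≤ τ → HasDerivAt f
      ((-(k * (p τ * (1 - p τ) * (δ + θ * (β * S τ * I τ) - p τ)
          + γ * (1 - p τ)))) * Real.exp (c * τ)
        + (1 - p τ) * (c * Real.exp (c * τ))) τ := by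
    intro τ hτ
    have h1 : HasDerivAt (fun τ => 1 - p τ)
        (-(k * (p τ * (1 - p τ) * (δ + θ * (β * S τ * I τ) - p τ)
          + γ * (1 - p τ)))) τ := ((hp τ hτ).const_sub 1)
    have h2 : HasDerivAt (fun τ => Real.exp (c * τ)) (c * Real.exp (c * τ)) τ := by
      have := ((hasDerivAt_id τ).const_mul c).exp
      simpa [mul_comm] using this
    exact h1.mul h2
  have hderiv_nonpos : ∀ τ : ℝ, 0 ≤ τ →
      (-(k * (p τ * (1 - p τ) * (δ + θ * (β * S τ * I τ) - p τ)
          + γ * (1 - p τ)))) * Real.exp (c * τ)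
        + (1 - p τ) * (c * Real.exp (c * τ)) ≤ 0 := by
    intro τ hτ
    obtain ⟨hp0, hp1⟩ := hpmem τ hτ
    have hq : 0 ≤ θ * (β * S τ * I τ) :=
      mul_nonneg hθ.le (mul_nonneg (mul_nonneg hβ.le (hSnn τ hτ)) (hInn τ hτ))
    have key : c * (1 - p τ) ≤
        k * (p τ * (1 - p τ) * (δ + θ * (β * S τ * I τ) - p τ) + γ * (1 - p τ)) := by
      rw [hc]
      have hu : (0:ℝ) ≤ 1 - p τ := sub_nonneg.2 hp1
      nlinarith [mul_nonneg hk.le (mul_nonneg (mul_nonneg hu hp0) hq),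
        mul_nonneg hk.le (mul_nonneg (mul_nonneg hu hu) (by linarith : (0:ℝ) ≤ 1 + p τ - δ))]
    have hexp : 0 < Real.exp (c * τ) := Real.exp_pos _
    nlinarith [mul_le_mul_of_nonneg_right key hexp.le]
  -- f is antitone on [0, ∞)
  have hanti : AntitoneOn f (Set.Ici (0 : ℝ)) := by
    apply antitoneOn_of_deriv_nonpos (convex_Ici 0)
    · intro τ hτ
      exact ((hfderiv τ hτ).continuousAt).continuousWithinAt
    · intro τ hτ
      rw [interior_Ici] at hτ
      exact ((hfderiv τ hτ.le).differentiableAt).differentiableWithinAt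
    · intro τ hτ
      rw [interior_Ici] at hτ
      rw [(hfderiv τ hτ.le).deriv]
      exact hderiv_nonpos τ hτ.le
  have hbound : ∀ τ : ℝ, 0 ≤ τ → 1 - p τ ≤ (1 - p 0) * Real.exp (-(c * τ)) := by
    intro τ hτ
    have := hanti (Set.self_mem_Ici) (Set.mem_Ici.2 hτ) hτ
    simp only [hf, mul_zero, Real.exp_zero, mul_one] at this
    have hexp : 0 < Real.exp (c * τ) := Real.exp_pos _
    rw [Real.exp_neg, ← div_eq_mul_inv, le_div_iff₀ hexp]
    exact this
  -- squeeze
  have h1 : Tendsto (fun τ => 1 - p τ) atTop (nhds 0) := by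
    have hupper : Tendsto (fun τ : ℝ => (1 - p 0) * Real.exp (-(c * τ))) atTop (nhds 0) := by
      have : Tendsto (fun τ : ℝ => Real.exp (-(c * τ))) atTop (nhds 0) := by
        have : Tendsto (fun τ : ℝ => -(c * τ)) atTop atBot := by
          apply tendsto_neg_atBot_iff.2
          exact Tendsto.const_mul_atTop hcpos tendsto_id
        exact Real.tendsto_exp_atBot.comp this
      simpa using this.const_mul (1 - p 0)
    apply tendsto_of_tendsto_of_tendsto_of_le_of_le' tendsto_const_nhds hupper
    · filter_upwards [eventually_ge_atTop (0 : ℝ)] with τ hτ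
      exact sub_nonneg.2 (hpmem τ hτ).2
    · filter_upwards [eventually_ge_atTop (0 : ℝ)] with τ hτ
      exact hbound τ hτ
  have := h1.const_sub 1
  simpa using this
end

section
/- Let μ, ν, θ > 0, δ ≥ 0, γ > 0 and β > ν + μ; set R₀ = β/(ν+μ), p_c = 1 − 1/R₀, ζ(S,I) = min(1, (δ + θβSI + √((δ + θβSI)² + 4γ))/2), and p⁰ = ζ(1/R₀, 0) = min(1, (δ + √(δ² + 4γ))/2). If p⁰ < p_c, then there exists exactly one I* > 0 such that ζ(1/R₀, I*) = p_c − ((ν+μ)/μ)I*. -/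
theorem qssa_aux (θ δ γ k c pc : ℝ)
    (hθ : 0 < θ) (hδ : 0 ≤ δ) (hγ : 0 < γ) (hk : 0 < k) (hc : 0 < c)
    (hpc : 0 < pc)
    (h0 : min 1 ((δ + Real.sqrt (δ ^ 2 + 4 * γ)) / 2) < pc) :
    ∃! I : ℝ, 0 < I ∧
      min 1 ((δ + θ * (k * I) + Real.sqrt ((δ + θ * (k * I)) ^ 2 + 4 * γ)) / 2)
        = pc - c * I := by
  have hgc : Continuous (fun I : ℝ =>
      min 1 ((δ + θ * (k * I) + Real.sqrt ((δ + θ * (k * I)) ^ 2 + 4 * γ)) / 2)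
        + c * I - pc) := by
    apply Continuous.sub _ continuous_const
    apply Continuous.add _ (by fun_prop)
    exact Continuous.min continuous_const (by fun_prop)
  have hmono : StrictMonoOn (fun I : ℝ =>
      min 1 ((δ + θ * (k * I) + Real.sqrt ((δ + θ * (k * I)) ^ 2 + 4 * γ)) / 2)
        + c * I - pc) (Set.Ici 0) := by
    intro x hx y hy hxy
    simp only [Set.mem_Ici] at hx hy
    have hprod : 0 < θ * k * (y - x) := mul_pos (mul_pos hθ hk) (sub_pos.mpr hxy)
    have haxy : δ + θ * (k * x) ≤ δ + θ * (k * y) := by nlinarith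
    have hax : 0 ≤ δ + θ * (k * x) := by positivity
    have hsq : Real.sqrt ((δ + θ * (k * x)) ^ 2 + 4 * γ)
        ≤ Real.sqrt ((δ + θ * (k * y)) ^ 2 + 4 * γ) := by
      apply Real.sqrt_le_sqrt; nlinarith
    have hmin : min 1 ((δ + θ * (k * x) + Real.sqrt ((δ + θ * (k * x)) ^ 2 + 4 * γ)) / 2)
        ≤ min 1 ((δ + θ * (k * y) + Real.sqrt ((δ + θ * (k * y)) ^ 2 + 4 * γ)) / 2) := by
      apply min_le_min le_rfl; linarith
    have hcc : c * x < c * y := by nlinarith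
    simp only
    linarith
  have hg0 : (fun I : ℝ =>
      min 1 ((δ + θ * (k * I) + Real.sqrt ((δ + θ * (k * I)) ^ 2 + 4 * γ)) / 2)
        + c * I - pc) 0 < 0 := by
    simp only [mul_zero, add_zero]
    linarith
  have hB0 : (0:ℝ) < pc / c + 1 := by positivity
  have hcB : c * (pc / c + 1) = pc + c := by field_simp
  have hgB : 0 < (fun I : ℝ =>
      min 1 ((δ + θ * (k * I) + Real.sqrt ((δ + θ * (k * I)) ^ 2 + 4 * γ)) / 2)
        + c * I - pc) (pc / c + 1) := by
    show 0 < min 1 ((δ + θ * (k * (pc / c + 1))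
        + Real.sqrt ((δ + θ * (k * (pc / c + 1))) ^ 2 + 4 * γ)) / 2)
        + c * (pc / c + 1) - pc
    have haB : 0 ≤ δ + θ * (k * (pc / c + 1)) := by positivity
    have hsB : 0 ≤ Real.sqrt ((δ + θ * (k * (pc / c + 1))) ^ 2 + 4 * γ) :=
      Real.sqrt_nonneg _
    have hminB : (0:ℝ) ≤ min 1 ((δ + θ * (k * (pc / c + 1))
        + Real.sqrt ((δ + θ * (k * (pc / c + 1))) ^ 2 + 4 * γ)) / 2) :=
      le_min (by norm_num) (by linarith)
    rw [hcB]
    linarith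
  obtain ⟨I, hImem, hgI⟩ := intermediate_value_Ioo hB0.le hgc.continuousOn ⟨hg0, hgB⟩
  have hIpos : 0 < I := hImem.1
  simp only at hgI
  refine ⟨I, ⟨hIpos, by linarith⟩, ?_⟩
  intro y ⟨hy0, hyeq⟩
  refine hmono.injOn hy0.le hIpos.le ?_
  show _ + c * y - pc = _ + c * I - pc
  rw [hgI]
  linarith


/-- Existence and uniqueness of the endemic equilibrium of the QSSA-reduced
model: if `p⁰ = ζ(1/R₀, 0) < p_c`, there is exactly one `I* > 0` with
`ζ(1/R₀, I*) = p_c − ((ν+μ)/μ) I*`. -/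
theorem qssa_endemic_exists_unique (μ ν θ δ γ β : ℝ)
    (hμ : 0 < μ) (hν : 0 < ν) (hθ : 0 < θ) (hδ : 0 ≤ δ) (hγ : 0 < γ)
    (hβ : ν + μ < β) :
    let pc : ℝ := 1 - (ν + μ) / β
    let ζ : ℝ → ℝ → ℝ := fun s i => min 1 ((δ + θ * (β * s * i)
        + Real.sqrt ((δ + θ * (β * s * i)) ^ 2 + 4 * γ)) / 2)
    ζ ((ν + μ) / β) 0 < pc →
      ∃! Istar : ℝ, 0 < Istar ∧
        ζ ((ν + μ) / β) Istar = pc - (ν + μ) / μ * Istar := by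
  intro pc ζ h0
  have hk0 : 0 < ν + μ := by linarith
  have hβ0 : 0 < β := lt_trans hk0 hβ
  have harg : ∀ I : ℝ, β * ((ν + μ) / β) * I = (ν + μ) * I := by
    intro I; field_simp
  have hrw : ∀ I : ℝ, ζ ((ν + μ) / β) I
      = min 1 ((δ + θ * ((ν + μ) * I)
        + Real.sqrt ((δ + θ * ((ν + μ) * I)) ^ 2 + 4 * γ)) / 2) := by
    intro I; simp only [ζ, harg]
  have h0' : min 1 ((δ + Real.sqrt (δ ^ 2 + 4 * γ)) / 2) < pc := by
    have := h0
    rw [hrw 0] at this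
    simpa using this
  have hpc : 0 < pc := by
    have h1 : (ν + μ) / β < 1 := (div_lt_one hβ0).mpr hβ
    show (0:ℝ) < 1 - (ν + μ) / β
    linarith
  have hc : 0 < (ν + μ) / μ := by positivity
  have := qssa_aux θ δ γ (ν + μ) ((ν + μ) / μ) pc hθ hδ hγ hk0 hc hpc h0'
  simpa only [hrw] using this
end
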